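/- Let A be an n-by-n reciprocal matrix with n ≥ 2. Then for every i ∈ {1,…,n}, the set E(A;i) is PWL connected. -/

import Mathlib

def PosVec {ι : Type*} (w : ι → ℝ) : Prop := ∀ i, 0 < w i

def IsReciprocal {ι : Type*} (A : Matrix ι ι ℝ) : Prop :=
  (∀ i j, 0 < A i j) ∧ ∀ i j, A j i = 1 / A i j

def IsEfficient {ι : Type*} (A : Matrix ι ι ℝ) (w : ι → ℝ) : Prop :=
  PosVec w ∧ ∀ v : ι → ℝ, PosVec v →
    (∀ i j, |A i j - v i / v j| ≤ |A i j - w i / w j|) →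
    ∃ c : ℝ, 0 < c ∧ v = c • w

/-- The principal submatrix `A(k)` of `A` obtained by deleting row and column `k`. -/
def delMat {n : ℕ} (A : Matrix (Fin n) (Fin n) ℝ) (k : Fin n) :
    Matrix {i : Fin n // i ≠ k} {i : Fin n // i ≠ k} ℝ :=
  Matrix.of fun a b => A a.1 b.1

/-- The vector `w(k)` obtained from `w` by deleting the `k`-th entry. -/
def delVec {n : ℕ} (w : Fin n → ℝ) (k : Fin n) : {i : Fin n // i ≠ k} → ℝ :=
  fun a => w a.1

/-- `E(A)`, the set of efficient vectors for `A`. -/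
def Eset {ι : Type*} (A : Matrix ι ι ℝ) : Set (ι → ℝ) := {w | IsEfficient A w}

/-- `E(A; i)`, the set of efficient vectors `w` for `A` such that `w(i)` is efficient
for `A(i)`. -/
def EsetSub {n : ℕ} (A : Matrix (Fin n) (Fin n) ℝ) (i : Fin n) : Set (Fin n → ℝ) :=
  {w | IsEfficient A w ∧ IsEfficient (delMat A i) (delVec w i)}

/-- A set `S` of vectors is PWL (piecewise linearly) connected if any two of its points are
joined by a finite polygonal path whose vertices and segments all lie in `S`. -/
def PWLConnected {ι : Type*} (S : Set (ι → ℝ)) : Prop :=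
  ∀ x ∈ S, ∀ y ∈ S, ∃ (s : ℕ) (u : ℕ → ι → ℝ), u 0 = x ∧ u s = y ∧
    (∀ i ≤ s, u i ∈ S) ∧
    ∀ i < s, ∀ t : ℝ, 0 < t → t < 1 → (t • u i + (1 - t) • u (i + 1)) ∈ S

/-!
A positive `w` is efficient for a reciprocal `A` iff the digraph with an arc `a → b` whenever
`w a ≤ A a b * w b` is strongly connected. For `w ∈ E(A; i)` this means that, once `w(i)` is
fixed, the admissible values of `w i` form an interval containing `A i j * w j` for every
`j ≠ i`; so a polygonal path in `E(A(i))` lifts linearly to `E(A; i)`, and `E(A; i)` is PWL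
connected as soon as `E(A(i))` is.

`E(A)` is PWL connected by induction on `n`. The digraph of `w ∈ E(A)` is semicomplete, hence
has a Hamiltonian path `a = a₁ → ⋯ → aₙ`; the segment from `w` to the vector `y` with
`y aₖ = A aₖ aₖ₊₁ * y aₖ₊₁` stays in `E(A)`, and `y ∈ E(A; a)`. Finally `E(A; a)` and
`E(A; b)` meet, at a vector built in the same way along a path from `a` to `b`.
-/

open Relation

section PolygonalPaths

variable {E F : Type*} [AddCommGroup E] [Module ℝ E] [AddCommGroup F] [Module ℝ F]

def PolyJoinedIn (S : Set E) : E → E → Prop :=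
  ReflTransGen fun x y => segment ℝ x y ⊆ S

def PolyConnected (S : Set E) : Prop :=
  ∀ x ∈ S, ∀ y ∈ S, PolyJoinedIn S x y

variable {S T : Set E} {x y z : E}

theorem PolyJoinedIn.of_segment (h : segment ℝ x y ⊆ S) : PolyJoinedIn S x y :=
  ReflTransGen.single h

theorem PolyJoinedIn.trans (hxy : PolyJoinedIn S x y) (hyz : PolyJoinedIn S y z) :
    PolyJoinedIn S x z :=
  ReflTransGen.trans hxy hyz

theorem PolyJoinedIn.symm (h : PolyJoinedIn S x y) : PolyJoinedIn S y x :=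
  ReflTransGen.mono (fun a b hab => (segment_symm ℝ a b).subset.trans hab) _ _
    (ReflTransGen.swap _ _ h)

theorem PolyJoinedIn.mono (hST : S ⊆ T) (h : PolyJoinedIn S x y) : PolyJoinedIn T x y :=
  ReflTransGen.mono (fun _ _ hab => hab.trans hST) _ _ h

theorem PolyJoinedIn.map {U : Set F} (f : E →ᵃ[ℝ] F) (hf : Set.MapsTo f S U)
    (h : PolyJoinedIn S x y) : PolyJoinedIn U (f x) (f y) :=
  ReflTransGen.lift f (fun a b hab => (image_segment ℝ f a b).symm.subset.trans
    ((Set.image_mono hab).trans hf.image_subset)) _ _ h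

theorem PolyJoinedIn.exists_path {ι : Type*} {S : Set (ι → ℝ)} {x y : ι → ℝ}
    (h : PolyJoinedIn S x y) (hx : x ∈ S) :
    ∃ (s : ℕ) (u : ℕ → ι → ℝ), u 0 = x ∧ u s = y ∧ (∀ i ≤ s, u i ∈ S) ∧
      ∀ i < s, ∀ t : ℝ, 0 < t → t < 1 → (t • u i + (1 - t) • u (i + 1)) ∈ S := by
  induction h using ReflTransGen.head_induction_on with
  | refl =>
    exact ⟨0, fun _ => y, rfl, rfl, fun _ _ => hx, fun _ h => absurd h (Nat.not_lt_zero _)⟩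
  | @head x c hxc _ ih =>
    obtain ⟨s, u, hu0, hus, hmem, hseg⟩ := ih (hxc (right_mem_segment ℝ x c))
    refine ⟨s + 1, fun | 0 => x | k + 1 => u k, rfl, hus, ?_, ?_⟩
    · rintro (_ | k) hk
      exacts [hx, hmem k (by omega)]
    · rintro (_ | k) hk t ht0 ht1
      · exact hxc ⟨t, 1 - t, ht0.le, by linarith, by ring, by simp [hu0]⟩
      · exact hseg k (by omega) t ht0 ht1

theorem PolyConnected.pwlConnected {ι : Type*} {S : Set (ι → ℝ)} (h : PolyConnected S) :
    PWLConnected S :=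
  fun x hx y hy => (h x hx y hy).exists_path hx

end PolygonalPaths

section Lists

variable {α : Type*} {R S : α → α → Prop} {l : List α}

theorem List.IsChain.and (hR : l.IsChain R) (hS : l.IsChain S) :
    l.IsChain fun a b => R a b ∧ S a b := by
  induction l using List.twoStepInduction with
  | nil => exact .nil
  | singleton a => exact .singleton a
  | cons_cons a b l _ ih =>
    rw [List.isChain_cons_cons] at hR hS ⊢
    exact ⟨⟨hR.1, hS.1⟩, ih b hR.2 hS.2⟩

theorem List.Pairwise.rel_or_rel (h : l.Pairwise R) {a b : α} (ha : a ∈ l) (hb : b ∈ l)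
    (hab : a ≠ b) : R a b ∨ R b a :=
  have : Std.Symm fun x y => R x y ∨ R y x := ⟨fun _ _ => Or.symm⟩
  (h.imp (S := fun x y => R x y ∨ R y x) Or.inl).forall ha hb hab

theorem List.IsChain.orderedInsert_of_total [DecidableRel R] (hR : ∀ a b, R a b ∨ R b a)
    (a : α) (hl : l.IsChain R) : (l.orderedInsert R a).IsChain R := by
  induction l with
  | nil => exact .singleton a
  | cons b l ih =>
    -- no transitivity needed: the head of `l.orderedInsert R a` is `a` or the head of `l`
    have hba := hR b a
    rcases l with _ | ⟨c, l⟩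
    · by_cases hab : R a b <;> simp_all [List.orderedInsert]
    · have ih := ih hl.tail
      by_cases hab : R a b
      · simp_all [List.orderedInsert]
      · by_cases hac : R a c <;> simp_all [List.orderedInsert]

theorem List.isChain_insertionSort_of_total [DecidableRel R] (hR : ∀ a b, R a b ∨ R b a)
    (l : List α) : (l.insertionSort R).IsChain R := by
  induction l with
  | nil => exact .nil
  | cons a l ih => exact ih.orderedInsert_of_total hR a

theorem exists_nodup_isChain_of_total [Fintype α] (hR : ∀ a b, R a b ∨ R b a) :
    ∃ l : List α, l.Nodup ∧ (∀ x, x ∈ l) ∧ l.IsChain R := by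
  classical
  have hperm := List.perm_insertionSort R Finset.univ.toList
  refine ⟨Finset.univ.toList.insertionSort R, hperm.nodup_iff.2 (Finset.nodup_toList _),
    fun x => hperm.mem_iff.2 (Finset.mem_toList.2 (Finset.mem_univ x)),
    List.isChain_insertionSort_of_total hR _⟩

end Lists

theorem convex_setOf_posVec {ι : Type*} : Convex ℝ {w : ι → ℝ | PosVec w} := by
  have : {w : ι → ℝ | PosVec w} = Set.univ.pi fun _ => Set.Ioi 0 := by
    ext w
    simp [PosVec]
  rw [this]
  exact convex_pi fun _ _ => convex_Ioi 0

theorem IsReciprocal.submatrix {ι κ : Type*} {A : Matrix ι ι ℝ} (hA : IsReciprocal A)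
    (f : κ → ι) : IsReciprocal (A.submatrix f f) :=
  ⟨fun a b => hA.1 (f a) (f b), fun a b => hA.2 (f a) (f b)⟩

section RatioDigraph

variable {ι : Type*} {A : Matrix ι ι ℝ} {w y : ι → ℝ} {a b : ι}

def RatioLe (A : Matrix ι ι ℝ) (w : ι → ℝ) (a b : ι) : Prop := w a ≤ A a b * w b

def RatioEq (A : Matrix ι ι ℝ) (w : ι → ℝ) (a b : ι) : Prop := w a = A a b * w b

theorem RatioEq.ratioLe (h : RatioEq A y a b) : RatioLe A y a b := h.le

theorem IsReciprocal.ratioEq_symm (hA : IsReciprocal A) (h : RatioEq A y a b) :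
    RatioEq A y b a := by
  have := (hA.1 a b).ne'
  unfold RatioEq at h ⊢
  rw [hA.2 a b, h]
  field_simp

theorem IsReciprocal.ratioLe_or_ratioLe (hA : IsReciprocal A) (a b : ι) :
    RatioLe A w a b ∨ RatioLe A w b a := by
  refine (le_total (w a) (A a b * w b)).imp id fun h => ?_
  unfold RatioLe
  rw [hA.2 a b, one_div, ← div_eq_inv_mul, le_div_iff₀ (hA.1 a b)]
  linarith

theorem RatioLe.smul_add_smul {s t : ℝ} (hs : 0 ≤ s) (ht : 0 ≤ t) (hw : RatioLe A w a b)
    (hy : RatioLe A y a b) : RatioLe A (s • w + t • y) a b := by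
  simp only [RatioLe, Pi.add_apply, Pi.smul_apply, smul_eq_mul] at hw hy ⊢
  nlinarith [mul_le_mul_of_nonneg_left hw hs, mul_le_mul_of_nonneg_left hy ht]

theorem div_le_div_of_ratioLe {v : ι → ℝ} (hw : PosVec w) (hv : PosVec v)
    (hdom : |A a b - v a / v b| ≤ |A a b - w a / w b|) (h : RatioLe A w a b) :
    v b / w b ≤ v a / w a := by
  have hle : w a / w b ≤ A a b := (div_le_iff₀ (hw b)).2 h
  have : w a / w b ≤ v a / v b := by
    rw [abs_of_nonneg (sub_nonneg.2 hle)] at hdom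
    linarith [le_abs_self (A a b - v a / v b)]
  rw [div_le_div_iff₀ (hw b) (hv b)] at this
  rw [div_le_div_iff₀ (hw b) (hw a)]
  nlinarith [hw a, hw b, hv a, hv b]

theorem isEfficient_of_reflTransGen (hw : PosVec w)
    (hsc : ∀ a b, ReflTransGen (RatioLe A w) a b) : IsEfficient A w := by
  refine ⟨hw, fun v hv hdom => ?_⟩
  have key : ∀ a b, v b / w b ≤ v a / w a := fun a b => by
    induction hsc a b with
    | refl => rfl
    | tail _ hcd ih => exact (div_le_div_of_ratioLe hw hv (hdom _ _) hcd).trans ih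
  rcases isEmpty_or_nonempty ι with hι | ⟨⟨k⟩⟩
  · exact ⟨1, one_pos, Subsingleton.elim _ _⟩
  refine ⟨v k / w k, div_pos (hv k) (hw k), funext fun j => ?_⟩
  have := le_antisymm (key k j) (key j k)
  rw [Pi.smul_apply, smul_eq_mul, ← this, div_mul_cancel₀ _ (hw j).ne']

end RatioDigraph

section Efficiency

variable {ι : Type*} {A : Matrix ι ι ℝ} {w : ι → ℝ} {a b : ι}

/-- Each ratio of the scaled vector lies between `w i / w j` and `A i j`. -/
theorem abs_sub_div_le_of_scale (hA : IsReciprocal A) (hw : PosVec w) {S : Set ι}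
    [DecidablePred (· ∈ S)] {c : ℝ} (hc0 : 0 < c) (hc1 : c ≤ 1)
    (hS : ∀ i ∈ S, ∀ j ∉ S, A i j * w j ≤ c * w i) (i j : ι) :
    |A i j - S.piecewise (c • w) w i / S.piecewise (c • w) w j| ≤ |A i j - w i / w j| := by
  have between {x y z : ℝ} (h : y ∈ Set.uIcc x z) : |x - y| ≤ |x - z| := by
    rw [abs_sub_comm x y, abs_sub_comm x z]
    exact Set.abs_sub_le_of_uIcc_subset_uIcc (Set.uIcc_subset_uIcc_left h)
  have hwi := hw i
  have hwj := hw j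
  by_cases hi : i ∈ S <;> by_cases hj : j ∈ S <;>
    simp only [Set.piecewise_eq_of_mem, Set.piecewise_eq_of_notMem, hi, hj, not_false_eq_true,
      Pi.smul_apply, smul_eq_mul]
  · rw [mul_div_mul_left _ _ hc0.ne']
  · refine between (Set.mem_uIcc.2 (Or.inl ⟨?_, ?_⟩))
    · rw [le_div_iff₀ hwj]
      exact hS i hi j hj
    · exact div_le_div_of_nonneg_right (mul_le_of_le_one_left hwi.le hc1) hwj.le
  · refine between (Set.mem_uIcc.2 (Or.inr ⟨?_, ?_⟩))
    · exact div_le_div_of_nonneg_left hwi.le (by positivity) (mul_le_of_le_one_left hwj.le hc1)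
    · have := hS j hj i hi
      rw [hA.2 i j, one_div, ← div_eq_inv_mul, div_le_iff₀ (hA.1 i j)] at this
      rw [div_le_iff₀ (by positivity)]
      linarith
  · rfl

/-- Otherwise, scaling `w` down on `S` by the largest `A i j * w j / w i` over `i ∈ S`, `j ∉ S`
gives a vector that dominates `w` without being proportional to it. -/
theorem IsEfficient.exists_ratioLe_of_mem_of_notMem [Fintype ι] (hA : IsReciprocal A)
    (he : IsEfficient A w) {S : Set ι} (ha : a ∈ S) (hb : b ∉ S) :
    ∃ i ∈ S, ∃ j ∉ S, RatioLe A w i j := by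
  classical
  by_contra! hS
  have hw := he.1
  let P := Finset.univ.filter fun p : ι × ι => p.1 ∈ S ∧ p.2 ∉ S
  obtain ⟨p, hp, hmax⟩ := P.exists_max_image (fun p => A p.1 p.2 * w p.2 / w p.1)
    ⟨(a, b), by simp [P, ha, hb]⟩
  simp only [P, Finset.mem_filter, Finset.mem_univ, true_and] at hp hmax
  set c := A p.1 p.2 * w p.2 / w p.1
  have hc0 : 0 < c := div_pos (mul_pos (hA.1 _ _) (hw _)) (hw _)
  have hc1 : c < 1 := (div_lt_one (hw _)).2 (not_le.1 (hS _ hp.1 _ hp.2))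
  have hcS : ∀ i ∈ S, ∀ j ∉ S, A i j * w j ≤ c * w i := fun i hi j hj =>
    (div_le_iff₀ (hw i)).1 (hmax (i, j) ⟨hi, hj⟩)
  have hpos : PosVec (S.piecewise (c • w) w) := fun k => by
    by_cases hk : k ∈ S <;> simp [hk, mul_pos hc0 (hw k), hw k]
  obtain ⟨d, -, hd⟩ := he.2 _ hpos (abs_sub_div_le_of_scale hA hw hc0 hc1.le hcS)
  have hda := congrFun hd a
  have hdb := congrFun hd b
  simp only [Set.piecewise_eq_of_mem, Set.piecewise_eq_of_notMem, ha, hb, not_false_eq_true,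
    Pi.smul_apply, smul_eq_mul] at hda hdb
  have hd1 : d = 1 := by nlinarith [hw b]
  subst hd1
  nlinarith [hw a]

theorem IsEfficient.reflTransGen [Fintype ι] (hA : IsReciprocal A) (he : IsEfficient A w)
    (a b : ι) : ReflTransGen (RatioLe A w) a b := by
  by_contra hab
  obtain ⟨i, hi, j, hj, hij⟩ :=
    he.exists_ratioLe_of_mem_of_notMem hA (S := {j | ReflTransGen (RatioLe A w) a j})
      ReflTransGen.refl hab
  exact hj (ReflTransGen.tail hi hij)

end Efficiency

section Deletion

variable {ι : Type*} {A : Matrix ι ι ℝ} {w : ι → ℝ} {i : ι}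

/-- `E(A; i)` over an arbitrary index type; `EsetSub` is the case `ι = Fin n`. -/
def EsetDel (A : Matrix ι ι ℝ) (i : ι) : Set (ι → ℝ) :=
  {w | IsEfficient A w ∧
    IsEfficient (A.submatrix ((↑) : {j // j ≠ i} → ι) (↑)) (w ∘ (↑))}

theorem EsetDel_subset_Eset : EsetDel A i ⊆ Eset A := fun _ hw => hw.1

theorem mem_EsetDel_iff [Fintype ι] [Nontrivial ι] (hA : IsReciprocal A) :
    w ∈ EsetDel A i ↔ PosVec w ∧
      IsEfficient (A.submatrix ((↑) : {j // j ≠ i} → ι) (↑)) (w ∘ (↑)) ∧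
      (∃ j ≠ i, RatioLe A w i j) ∧ ∃ j ≠ i, RatioLe A w j i := by
  classical
  obtain ⟨k, hk⟩ := exists_ne i
  constructor
  · rintro ⟨he, hsub⟩
    obtain ⟨i', hi', j, hj, hout⟩ :=
      he.exists_ratioLe_of_mem_of_notMem hA (S := {i}) (Set.mem_singleton i) hk
    obtain ⟨j', hj', i'', hi'', hin⟩ :=
      he.exists_ratioLe_of_mem_of_notMem hA (S := {i}ᶜ) hk (by simp : i ∉ ({i}ᶜ : Set ι))
    simp only [Set.mem_compl_iff, Set.mem_singleton_iff, not_not] at hi' hj hj' hi''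
    exact ⟨he.1, hsub, ⟨j, hj, hi' ▸ hout⟩, ⟨j', hj', hi'' ▸ hin⟩⟩
  · rintro ⟨hw, hsub, ⟨jo, hjo, hout⟩, ⟨ji, hji, hin⟩⟩
    refine ⟨isEfficient_of_reflTransGen hw fun a b => ?_, hsub⟩
    have lift (a b : {j // j ≠ i}) : ReflTransGen (RatioLe A w) a b :=
      ReflTransGen.lift Subtype.val (fun _ _ h => h) _ _
        (hsub.reflTransGen (hA.submatrix _) a b)
    by_cases ha : a = i <;> by_cases hb : b = i
    · rw [ha, hb]
    · exact ha ▸ ReflTransGen.head hout (lift ⟨jo, hjo⟩ ⟨b, hb⟩)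
    · exact hb ▸ ReflTransGen.tail (lift ⟨a, ha⟩ ⟨ji, hji⟩) hin
    · exact lift ⟨a, ha⟩ ⟨b, hb⟩

/-- Given `w(i)`, the admissible values of `w i` form an interval. -/
theorem segment_subset_EsetDel [Fintype ι] [Nontrivial ι] (hA : IsReciprocal A)
    {p q : ι → ℝ} (hp : p ∈ EsetDel A i) (hq : q ∈ EsetDel A i)
    (hpq : ∀ j ≠ i, p j = q j) :
    segment ℝ p q ⊆ EsetDel A i := by
  wlog hle : p i ≤ q i generalizing p q
  · rw [segment_symm]
    exact this hq hp (fun j hj => (hpq j hj).symm) (le_of_not_ge hle)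
  rintro _ ⟨s, t, hs, ht, hst, rfl⟩
  rw [mem_EsetDel_iff hA] at hp hq ⊢
  obtain ⟨hppos, hpsub, -, jp, hjp, hin⟩ := hp
  obtain ⟨hqpos, -, ⟨jq, hjq, hout⟩, -⟩ := hq
  have hoff : ∀ j ≠ i, (s • p + t • q) j = p j := fun j hj => by
    simp only [Pi.add_apply, Pi.smul_apply, smul_eq_mul, hpq j hj, ← add_mul, hst, one_mul]
  have hmid : (s • p + t • q) i ∈ Set.Icc (p i) (q i) := by
    obtain rfl : s = 1 - t := by linarith
    simp only [Pi.add_apply, Pi.smul_apply, smul_eq_mul]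
    constructor <;> nlinarith [mul_nonneg hs (sub_nonneg.2 hle), mul_nonneg ht (sub_nonneg.2 hle)]
  refine ⟨convex_setOf_posVec hppos hqpos hs ht hst, ?_, ⟨jq, hjq, ?_⟩, ⟨jp, hjp, ?_⟩⟩
  · convert hpsub using 1
    funext j
    exact hoff j j.2
  · rw [RatioLe, hoff jq hjq, hpq jq hjq]
    exact hmid.2.trans hout
  · rw [RatioLe, hoff jp hjp]
    exact hin.trans (mul_le_mul_of_nonneg_left hmid.1 (hA.1 _ _).le)

variable [DecidableEq ι]

def extendAt (A : Matrix ι ι ℝ) {i : ι} (j₀ : {j // j ≠ i}) :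
    ({j // j ≠ i} → ℝ) →ₗ[ℝ] ι → ℝ where
  toFun u x := if h : x = i then A i j₀ * u j₀ else u ⟨x, h⟩
  map_add' u v := by
    funext x
    by_cases h : x = i <;> simp [h, mul_add]
  map_smul' c u := by
    funext x
    by_cases h : x = i <;> simp [h, mul_left_comm]

theorem extendAt_apply_of_ne (j₀ : {j // j ≠ i}) (u : {j // j ≠ i} → ℝ) {x : ι}
    (hx : x ≠ i) :
    extendAt A j₀ u x = u ⟨x, hx⟩ := by
  simp [extendAt, hx]

theorem extendAt_mem_EsetDel [Fintype ι] (hA : IsReciprocal A) (j₀ : {j // j ≠ i})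
    {u : {j // j ≠ i} → ℝ} (hu : IsEfficient (A.submatrix (↑) (↑)) u) :
    extendAt A j₀ u ∈ EsetDel A i := by
  have := nontrivial_of_ne _ _ j₀.2
  have hcomp : extendAt A j₀ u ∘ (↑) = u := funext fun j => extendAt_apply_of_ne j₀ u j.2
  have htight : RatioEq A (extendAt A j₀ u) i j₀ := by
    simp [RatioEq, extendAt, j₀.2]
  refine (mem_EsetDel_iff hA).2 ⟨fun x => ?_, by rwa [hcomp], ⟨j₀, j₀.2, htight.ratioLe⟩,
    ⟨j₀, j₀.2, (hA.ratioEq_symm htight).ratioLe⟩⟩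
  by_cases hx : x = i
  · simp [extendAt, hx, mul_pos (hA.1 _ _) (hu.1 j₀)]
  · rw [extendAt_apply_of_ne j₀ u hx]
    exact hu.1 _

theorem polyConnected_EsetDel [Fintype ι] [Nontrivial ι] (hA : IsReciprocal A)
    (h : PolyConnected (Eset (A.submatrix ((↑) : {j // j ≠ i} → ι) (↑)))) :
    PolyConnected (EsetDel A i) := by
  obtain ⟨j, hj⟩ := exists_ne i
  set L := extendAt A ⟨j, hj⟩
  have hL : Set.MapsTo L (Eset _) (EsetDel A i) := fun _ hu => extendAt_mem_EsetDel hA _ hu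
  have toL {w} (hw : w ∈ EsetDel A i) : PolyJoinedIn (EsetDel A i) w (L (w ∘ (↑))) :=
    .of_segment <| segment_subset_EsetDel hA hw (hL hw.2) fun x hx =>
      (extendAt_apply_of_ne _ (w ∘ Subtype.val) hx).symm
  intro w hw w' hw'
  exact (toL hw).trans (((h _ hw.2 _ hw'.2).map L.toAffineMap hL).trans (toL hw').symm)

end Deletion

section TightVectors

variable {ι : Type*} {A : Matrix ι ι ℝ} {w y : ι → ℝ} {i c d : ι}

theorem isEfficient_of_isChain_ratioEq (hA : IsReciprocal A) (hy : PosVec y) {l : List ι}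
    (hcov : ∀ x, x ∈ l) (hl : l.IsChain (RatioEq A y)) : IsEfficient A y := by
  have : Std.Symm (RatioEq A y) := ⟨fun _ _ => hA.ratioEq_symm⟩
  have hp : l.Pairwise (ReflTransGen (RatioEq A y)) :=
    (hl.imp fun _ _ => ReflTransGen.single).pairwise
  refine isEfficient_of_reflTransGen hy fun a b => ?_
  rcases eq_or_ne a b with rfl | hab
  · rfl
  · exact ReflTransGen.mono (fun _ _ => RatioEq.ratioLe) _ _ (hp.forall (hcov a) (hcov b) hab)

theorem mem_EsetDel_of_isChain (hA : IsReciprocal A) (hy : PosVec y) {t : List ι} (hi : i ∉ t)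
    (hcov : ∀ x, x ∈ i :: t) (hl : (i :: t).IsChain (RatioEq A y)) : y ∈ EsetDel A i := by
  have hne : ∀ x ∈ t, x ≠ i := fun x hx h => hi (h ▸ hx)
  refine ⟨isEfficient_of_isChain_ratioEq hA hy hcov hl,
    isEfficient_of_isChain_ratioEq (hA.submatrix _) (fun j => hy j) (l := t.pmap Subtype.mk hne)
      (fun x => ?_) (List.isChain_pmap_of_isChain (f := Subtype.mk) (fun _ _ _ _ h => h)
        (hl.tail : t.IsChain (RatioEq A y)) hne)⟩
  exact List.mem_pmap.2 ⟨x, (List.mem_cons.1 (hcov x)).resolve_left x.2, rfl⟩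

theorem div_le_div_of_ratioLe_of_ratioEq (hy : PosVec y) (hw : RatioLe A w c d)
    (hy' : RatioEq A y c d) : w c / y c ≤ w d / y d := by
  rw [div_le_div_iff₀ (hy c) (hy d), hy']
  nlinarith [mul_le_mul_of_nonneg_right hw (hy d).le]

theorem ratioLe_of_div_le_div (hw : PosVec w) (hy : PosVec y) (hcd : RatioLe A w c d)
    (h : w d / y d ≤ w c / y c) : RatioLe A y c d := by
  rw [div_le_div_iff₀ (hy d) (hy c)] at h
  refine le_of_mul_le_mul_left ?_ (hw d)
  calc w d * y c ≤ w c * y d := by linarith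
    _ ≤ A c d * w d * y d := mul_le_mul_of_nonneg_right hcd (hy d).le
    _ = w d * (A c d * y d) := by ring

/-- If `l` is a Hamiltonian path of `w` along which `y` is tight, then `w / y` increases along
`l`; so every arc of `w` either runs forward along `l` or is also an arc of `y`, and in both
cases the vectors between `w` and `y` inherit it. -/
theorem segment_subset_Eset_of_isChain [Fintype ι] (hA : IsReciprocal A) (hw : IsEfficient A w)
    (hy : PosVec y) {l : List ι} (hcov : ∀ x, x ∈ l)
    (hl : l.IsChain fun c d => RatioLe A w c d ∧ RatioEq A y c d) :
    segment ℝ w y ⊆ Eset A := by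
  rintro _ ⟨s, t, hs, ht, hst, rfl⟩
  have hz {c d} (hwcd : RatioLe A w c d) (hycd : RatioLe A y c d) :
      RatioLe A (s • w + t • y) c d :=
    hwcd.smul_add_smul hs ht hycd
  have hpath : l.Pairwise (ReflTransGen (RatioLe A (s • w + t • y))) :=
    (hl.imp fun _ _ h => ReflTransGen.single (hz h.1 h.2.ratioLe)).pairwise
  have hmono : l.Pairwise fun c d => w c / y c ≤ w d / y d :=
    List.pairwise_map.1 ((List.isChain_map _).2 (hl.imp fun _ _ h =>
      div_le_div_of_ratioLe_of_ratioEq hy h.1 h.2)).pairwise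
  refine isEfficient_of_reflTransGen (convex_setOf_posVec hw.1 hy hs ht hst) fun a b =>
    reflTransGen_closed (fun c d hcd => ?_) _ _ (hw.reflTransGen hA a b)
  rcases eq_or_ne c d with rfl | hne
  · rfl
  rcases (hpath.and hmono).rel_or_rel (hcov c) (hcov d) hne with h | h
  · exact h.1
  · exact .single (hz hcd (ratioLe_of_div_le_div hw.1 hy hcd h.2))

variable [DecidableEq ι]

def tightAlong (A : Matrix ι ι ℝ) : List ι → ι → ℝ
  | a :: b :: l => Function.update (tightAlong A (b :: l)) a (A a b * tightAlong A (b :: l) b)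
  | _ => 1

theorem tightAlong_pos (hA : IsReciprocal A) : ∀ l, PosVec (tightAlong A l)
  | a :: b :: l => fun x => by
    have ih := tightAlong_pos hA (b :: l)
    rcases eq_or_ne x a with rfl | hx
    · simpa [tightAlong] using mul_pos (hA.1 x b) (ih b)
    · simpa [tightAlong, hx] using ih x
  | [] | [_] => fun _ => one_pos

theorem isChain_tightAlong : ∀ {l : List ι}, l.Nodup → l.IsChain (RatioEq A (tightAlong A l))
  | a :: b :: l, hl => by
    have ha : a ∉ b :: l := (List.nodup_cons.1 hl).1
    have hagree : ∀ x ∈ b :: l, tightAlong A (a :: b :: l) x = tightAlong A (b :: l) x :=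
      fun x hx => by simp [tightAlong, ne_of_mem_of_not_mem hx ha]
    rw [List.isChain_cons_cons]
    refine ⟨?_, (isChain_tightAlong hl.of_cons).imp_of_mem_imp fun x z hx hz h => ?_⟩
    · rw [RatioEq, hagree b List.mem_cons_self]
      simp [tightAlong]
    · rwa [RatioEq, hagree x hx, hagree z hz]
  | [], _ => .nil
  | [a], _ => .singleton a

theorem IsEfficient.exists_segment_subset_Eset [Fintype ι] [Nonempty ι] (hA : IsReciprocal A)
    (hw : IsEfficient A w) : ∃ a, ∃ y ∈ EsetDel A a, segment ℝ w y ⊆ Eset A := by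
  obtain ⟨_ | ⟨a, t⟩, hnd, hcov, hl⟩ :=
    exists_nodup_isChain_of_total (hA.ratioLe_or_ratioLe (w := w))
  · exact absurd (hcov (Classical.arbitrary ι)) List.not_mem_nil
  have htight := isChain_tightAlong (A := A) hnd
  exact ⟨a, tightAlong A (a :: t),
    mem_EsetDel_of_isChain hA (tightAlong_pos hA _) (List.nodup_cons.1 hnd).1 hcov htight,
    segment_subset_Eset_of_isChain hA hw (tightAlong_pos hA _) hcov (hl.and htight)⟩

/-- A vector tight along a Hamiltonian path from `a` to `b` lies in both `E(A; a)` and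
`E(A; b)`. -/
theorem exists_mem_EsetDel_inter [Fintype ι] (hA : IsReciprocal A) {a b : ι} (hab : a ≠ b) :
    ∃ z, z ∈ EsetDel A a ∧ z ∈ EsetDel A b := by
  set m := (Finset.univ.filter fun x => x ≠ a ∧ x ≠ b).toList
  set l := a :: (m ++ [b])
  have hl : l.Nodup := by
    simp [l, m, List.nodup_append, hab, Finset.nodup_toList]
  have hcov : ∀ x, x ∈ l := fun x => by
    simp only [l, m, List.mem_cons, List.mem_append, Finset.mem_toList, Finset.mem_filter,
      Finset.mem_univ, true_and]
    tauto
  have hc := isChain_tightAlong (A := A) hl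
  have hrev : l.reverse = b :: (m.reverse ++ [a]) := by simp [l]
  have hl' : (b :: (m.reverse ++ [a])).Nodup := hrev ▸ List.nodup_reverse.2 hl
  refine ⟨tightAlong A l,
    mem_EsetDel_of_isChain hA (tightAlong_pos hA l) (List.nodup_cons.1 hl).1 hcov hc,
    mem_EsetDel_of_isChain hA (tightAlong_pos hA l) (List.nodup_cons.1 hl').1
      (fun x => hrev ▸ List.mem_reverse.2 (hcov x)) ?_⟩
  rw [← hrev]
  exact List.isChain_reverse.2 (hc.imp fun _ _ h => hA.ratioEq_symm h)

end TightVectors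

theorem polyConnected_Eset {ι : Type*} [Fintype ι] {A : Matrix ι ι ℝ} (hA : IsReciprocal A) :
    PolyConnected (Eset A) := by
  classical
  suffices ∀ A : Matrix ι ι ℝ, IsReciprocal A → PolyConnected (Eset A) from this A hA
  refine Fintype.induction_subsingleton_or_nontrivial
    (P := fun ι _ => ∀ A : Matrix ι ι ℝ, IsReciprocal A → PolyConnected (Eset A)) ι ?_ ?_
  · intro ι _ _ A _ w hw w' hw'
    exact .of_segment fun z hz => isEfficient_of_reflTransGen
      (convex_setOf_posVec.segment_subset hw.1 hw'.1 hz) fun a b => Subsingleton.elim a b ▸ .refl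
  · intro ι _ _ IH A hA w hw w' hw'
    have hdel (c : ι) : PolyConnected (EsetDel A c) :=
      polyConnected_EsetDel hA (IH _ (Fintype.card_subtype_lt (x := c) (by simp))
        _ (hA.submatrix _))
    obtain ⟨a, y, hy, hwy⟩ := IsEfficient.exists_segment_subset_Eset hA hw
    obtain ⟨a', y', hy', hwy'⟩ := IsEfficient.exists_segment_subset_Eset hA hw'
    obtain ⟨z, hz, hz'⟩ : ∃ z, z ∈ EsetDel A a ∧ z ∈ EsetDel A a' := by
      rcases eq_or_ne a a' with rfl | h
      · exact ⟨y, hy, hy⟩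
      · exact exists_mem_EsetDel_inter hA h
    have hyz := (hdel a y hy z hz).mono EsetDel_subset_Eset
    have hzy' := (hdel a' z hz' y' hy').mono EsetDel_subset_Eset
    exact (((PolyJoinedIn.of_segment hwy).trans hyz).trans hzy').trans
      (PolyJoinedIn.of_segment hwy').symm

/-- for every reciprocal matrix `A` (`n ≥ 2`) and every index `i`, the set
`E(A; i)` is PWL connected. -/
theorem EsetSub_PWLConnected {n : ℕ} (hn : 2 ≤ n) (A : Matrix (Fin n) (Fin n) ℝ)
    (hA : IsReciprocal A) :
    ∀ i : Fin n, PWLConnected (EsetSub A i) := by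
  intro i
  have := Fin.nontrivial_iff_two_le.2 hn
  exact (polyConnected_EsetDel hA (polyConnected_Eset (hA.submatrix _))).pwlConnected
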